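/- Let f be a uniform ps-morphism on A and k ≥ 3. Suppose u^k has a decomposition (p_i, s_i, a_i, w_i)_{i=0,...,k} in f(w) (i.e., w = a_0 w_1 a_1 ... w_k a_k, f(a_i) = p_i s_i, s_0 ≠ ε, p_i ≠ ε for i ≥ 1, u = s_{i-1} f(w_i) p_i for 1 ≤ i ≤ k) and suppose |s_i| = |s_{i+1}| for some 1 ≤ i ≤ k-2. Then w is not k-power-free. -/
import Mathlib


/-- n-fold power of a word (list) under concatenation. -/
def wpow {α : Type*} (u : List α) (n : ℕ) : List α := (List.replicate n u).flatten

/-- A word is k-power-free if it contains no factor `u^k` with `u` non-empty. -/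
def kPowerFree {α : Type*} (k : ℕ) (w : List α) : Prop :=
  ∀ u : List α, u ≠ [] → ¬ (wpow u k <:+: w)

/-- Extension of a letter map to a morphism of free monoids. -/
def applyMorph {α β : Type*} (g : α → List β) (w : List α) : List β := w.flatMap g

lemma wpow_succ' {α : Type*} (v : List α) (n : ℕ) :
    wpow v (n+1) = wpow v n ++ v := by
  simp [wpow, List.replicate_succ']

lemma wpow_succ {α : Type*} (v : List α) (n : ℕ) :
    wpow v (n+1) = v ++ wpow v n := by
  simp [wpow, List.replicate_succ]

lemma flat_const {β : Type*} (f : ℕ → List β) (v : List β) :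
    ∀ n, (∀ i < n, f i = v) → (List.range n).flatMap f = wpow v n := by
  intro n
  induction n with
  | zero => intro _; simp [wpow]
  | succ n ih =>
      intro h
      rw [List.range_succ, List.flatMap_append, ih (fun i hi => h i (by omega)),
        wpow_succ']
      simp [h n (by omega)]

lemma front_shift {β : Type*} (A W : ℕ → List β) :
    ∀ n, A 0 ++ (List.range n).flatMap (fun i => W (i+1) ++ A (i+1))
       = (List.range n).flatMap (fun i => A i ++ W (i+1)) ++ A n := by
  intro n
  induction n with
  | zero => simp
  | succ n ih =>
      rw [List.range_succ, List.flatMap_append, List.flatMap_append,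
        ← List.append_assoc, ih]
      simp [List.append_assoc]

lemma mod_trick {L x m a b : ℕ} (hx : x < L) (hm : m < L)
    (h : x + L * a = m + L * b) : x = m := by
  have h1 : (x + L * a) % L = (m + L * b) % L := by rw [h]
  rwa [Nat.add_mul_mod_self_left, Nat.add_mul_mod_self_left,
    Nat.mod_eq_of_lt hx, Nat.mod_eq_of_lt hm] at h1

lemma mod_trick0 {L x a b : ℕ} (hx1 : 0 < x) (hx2 : x ≤ L)
    (h : x + L * a = 0 + L * b) : x = L := by
  rcases Nat.lt_or_ge x L with h' | h'
  · have := mod_trick h' (show 0 < L by omega) h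
    omega
  · omega

lemma mod_trick' {L x m a b : ℕ} (hx : x ≤ L) (hm0 : 0 < m) (hm : m < L)
    (h : x + L * a = m + L * b) : x = m := by
  rcases Nat.lt_or_ge x L with h' | h'
  · exact mod_trick h' hm h
  · exfalso
    have hxL : x = L := by omega
    rw [hxL] at h
    have h1 : (L + L * a) % L = (m + L * b) % L := by rw [h]
    rw [Nat.add_mul_mod_self_left, Nat.add_mul_mod_self_left,
      Nat.mod_self, Nat.mod_eq_of_lt hm] at h1
    omega

lemma stepz {L m z A B P Q : ℕ} (key : m + A + P = m + B + Q)
    (hP : P + m = L) (hQ : Q + z = L) : z + A = m + B := by omega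

lemma stepx {L m x A B P Q : ℕ} (key : x + A + P = m + B + Q)
    (hP : P + m = L) (hQ : Q + m = L) : x + A = m + B := by omega

theorem synchronized_not_kPowerFree {α β : Type*} (g : α → List β) (L k : ℕ)
    (hk : 3 ≤ k)
    (huniform : ∀ b : α, (g b).length = L)
    (hps : ∀ (a b c : α) (p s s' p' : List β),
      g a = p ++ s → g b = p ++ s' → g c = p' ++ s → b = a ∨ c = a)
    (u : List β) (hu : u ≠ []) (w : List α)
    (p s : ℕ → List β) (a : ℕ → α) (ws : ℕ → List α)
    (hw : w = [a 0] ++ (List.range k).flatMap (fun i => ws (i+1) ++ [a (i+1)]))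
    (him : ∀ i ≤ k, g (a i) = p i ++ s i)
    (hs0 : s 0 ≠ [])
    (hp : ∀ i, 1 ≤ i → i ≤ k → p i ≠ [])
    (hu' : ∀ i, 1 ≤ i → i ≤ k → u = s (i-1) ++ applyMorph g (ws i) ++ p i)
    (hsync : ∃ i, 1 ≤ i ∧ i ≤ k - 2 ∧ (s i).length = (s (i+1)).length) :
    ¬ kPowerFree k w := by
  intro hfree
  obtain ⟨i, hi1, hi2, hsy⟩ := hsync
  have hik : i + 2 ≤ k := by omega
  -- length bookkeeping
  have hlen : ∀ j, j ≤ k → (p j).length + (s j).length = L := by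
    intro j hj
    have h := congrArg List.length (him j hj)
    rw [List.length_append, huniform] at h
    omega
  have hL : 0 < L := by
    have h1 := hlen 1 (by omega)
    have h2 : 0 < (p 1).length := List.length_pos_iff.mpr (hp 1 le_rfl (by omega))
    omega
  have lenf : ∀ x : List α, (applyMorph g x).length = L * x.length := by
    intro x
    induction x with
    | nil => simp [applyMorph]
    | cons c t ih =>
        simp only [applyMorph, List.flatMap_cons, List.length_append,
          List.length_cons, huniform] at *
        rw [ih]
        ring
  have hslt : ∀ j, 1 ≤ j → j ≤ k → (s j).length < L := by
    intro j h1 h2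
    have := hlen j h2
    have : 0 < (p j).length := List.length_pos_iff.mpr (hp j h1 h2)
    omega
  -- letter injectivity of g
  have ginj : ∀ x y : α, g x = g y → x = y := by
    intro x y h
    rcases hps x y y (g x) [] [] (g y) (by simp) (by simp [h]) (by simp)
      with h' | h' <;> exact h'.symm
  -- injectivity of the morphism
  have minj : ∀ x y : List α, applyMorph g x = applyMorph g y → x = y := by
    intro x
    induction x with
    | nil =>
        intro y h
        cases y with
        | nil => rfl
        | cons b t =>
            exfalso
            simp only [applyMorph, List.flatMap_nil, List.flatMap_cons] at h
            have := congrArg List.length h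
            rw [List.length_append, huniform] at this
            simp at this
            omega
    | cons c t ih =>
        intro y h
        cases y with
        | nil =>
            exfalso
            simp only [applyMorph, List.flatMap_nil, List.flatMap_cons] at h
            have := congrArg List.length h
            rw [List.length_append, huniform] at this
            simp at this
            omega
        | cons b t' =>
            simp only [applyMorph, List.flatMap_cons] at h
            obtain ⟨h1, h2⟩ := List.append_inj h (by rw [huniform, huniform])
            rw [ginj c b h1, ih t' h2]
  -- the key length equation
  have hkey : ∀ j, 1 ≤ j → j + 1 ≤ k →
      (s (j-1)).length + L * (ws j).length + (p j).length
        = (s j).length + L * (ws (j+1)).length + (p (j+1)).length := by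
    intro j h1 h2
    have e1 := hu' j h1 (by omega)
    have e2 := hu' (j+1) (by omega) h2
    simp only [Nat.add_sub_cancel] at e2
    have e3 := congrArg List.length (e1.symm.trans e2)
    simp only [List.length_append, lenf] at e3
    linarith
  have hmlt : (s i).length < L := hslt i hi1 (by omega)
  -- forward propagation
  have hfwd : ∀ d, i + d + 1 ≤ k →
      (s (i+d)).length = (s i).length ∧ (s (i+d+1)).length = (s i).length := by
    intro d
    induction d with
    | zero => exact fun _ => ⟨rfl, hsy.symm⟩
    | succ e ih =>
        intro hd
        obtain ⟨ha, hb⟩ := ih (by omega)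
        refine ⟨hb, ?_⟩
        have key := hkey (i+e+1) (by omega) (by omega)
        simp only [Nat.add_sub_cancel] at key
        rw [ha, hb] at key
        have hP := hlen (i+e+1) (by omega); rw [hb] at hP
        have hQ := hlen (i+e+2) (by omega)
        exact mod_trick (hslt (i+e+2) (by omega) (by omega)) hmlt (stepz key hP hQ)
  -- backward propagation
  have hbwd : ∀ e, e ≤ i - 1 →
      (s (i-e)).length = (s i).length ∧ (s (i-e+1)).length = (s i).length := by
    intro e
    induction e with
    | zero => exact fun _ => ⟨rfl, hsy.symm⟩
    | succ e ih =>
        intro he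
        obtain ⟨ha, hb⟩ := ih (by omega)
        have hj2 : 2 ≤ i - e := by omega
        have key := hkey (i-e) (by omega) (by omega)
        rw [ha] at key
        have hP := hlen (i-e) (by omega); rw [ha] at hP
        have hQ := hlen (i-e+1) (by omega); rw [hb] at hQ
        have hx := stepx key hP hQ
        have hxm := mod_trick (hslt (i-e-1) (by omega) (by omega)) hmlt hx
        constructor
        · rw [show i - (e+1) = i - e - 1 by omega]; exact hxm
        · rw [show i - (e+1) + 1 = i - e by omega]; exact ha
  have hs_all : ∀ j, 1 ≤ j → j ≤ k → (s j).length = (s i).length := by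
    intro j h1 h2
    rcases Nat.lt_or_ge j i with h | h
    · have := (hbwd (i - j) (by omega)).1
      rwa [show i - (i - j) = j by omega] at this
    · rcases Nat.lt_or_ge j k with h' | h'
      · have := (hfwd (j - i) (by omega)).1
        rwa [show i + (j - i) = j by omega] at this
      · have := (hfwd (k - 1 - i) (by omega)).2
        rwa [show i + (k-1-i) + 1 = j by omega] at this
  -- the length of s 0
  have hs0len : 0 < (s 0).length := List.length_pos_iff.mpr hs0
  have hs0le : (s 0).length ≤ L := by have := hlen 0 (by omega); omega
  have hx0 : (s 0).length + L * (ws 1).length = (s i).length + L * (ws 2).length := by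
    have key := hkey 1 (by omega) (by omega)
    rw [show (1:ℕ) - 1 = 0 from rfl] at key
    rw [hs_all 1 (by omega) (by omega)] at key
    have hP := hlen 1 (by omega); rw [hs_all 1 (by omega) (by omega)] at hP
    have hQ := hlen 2 (by omega); rw [hs_all 2 (by omega) (by omega)] at hQ
    exact stepx key hP hQ
  -- p's are all equal
  have hpeq : ∀ j, 1 ≤ j → j ≤ k → p j = p 1 := by
    intro j h1 h2
    have e1 := hu' j h1 h2
    have e2 := hu' 1 (by omega) (by omega)
    rw [show (1:ℕ) - 1 = 0 from rfl] at e2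
    refine (List.append_inj' (e1.symm.trans e2) ?_).2
    have l1 := hlen j h2
    have l2 := hlen 1 (by omega)
    have m1 := hs_all j h1 h2
    have m2 := hs_all 1 (by omega) (by omega)
    omega
  rcases Nat.eq_zero_or_pos ((s i).length) with hm0 | hmpos
  · -- edge case : m = 0, |s 0| = L
    have hs0L : (s 0).length = L := by
      rw [hm0] at hx0
      exact mod_trick0 hs0len hs0le hx0
    have hsnil : ∀ j, 1 ≤ j → j ≤ k → s j = [] := by
      intro j h1 h2
      have := hs_all j h1 h2
      rw [hm0] at this
      exact List.length_eq_zero_iff.mp this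
    have hp0 : p 0 = [] := by
      have := hlen 0 (by omega)
      rw [hs0L] at this
      exact List.length_eq_zero_iff.mp (by omega)
    have haeq : ∀ j, 1 ≤ j → j ≤ k → a j = a 1 := by
      intro j h1 h2
      apply ginj
      rw [him j h2, him 1 (by omega), hpeq j h1 h2, hsnil j h1 h2,
        hsnil 1 (by omega) (by omega)]
    have hweq : ∀ j, 2 ≤ j → j ≤ k → ws j = ws 2 := by
      intro j h1 h2
      apply minj
      have e1 := hu' j (by omega) h2
      rw [hsnil (j-1) (by omega) (by omega), hpeq j (by omega) h2] at e1
      have e2 := hu' 2 (by omega) (by omega)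
      rw [show (2:ℕ) - 1 = 1 from rfl] at e2
      rw [hsnil 1 (by omega) (by omega), hpeq 2 (by omega) (by omega)] at e2
      simp only [List.nil_append] at e1 e2
      exact List.append_cancel_right (e1.symm.trans e2)
    have hga0 : g (a 0) = s 0 := by
      rw [him 0 (by omega), hp0]; simp
    have hga1 : g (a 1) = p 1 := by
      rw [him 1 (by omega), hsnil 1 (by omega) (by omega)]; simp
    have hga2 : g (a 2) = p 2 := by
      rw [him 2 (by omega), hsnil 2 (by omega) (by omega)]; simp
    have hhead : [a 0] ++ ws 1 ++ [a 1] = ws 2 ++ [a 2] := by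
      apply minj
      have e1 := hu' 1 (by omega) (by omega)
      rw [show (1:ℕ) - 1 = 0 from rfl] at e1
      have e2 := hu' 2 (by omega) (by omega)
      rw [show (2:ℕ) - 1 = 1 from rfl] at e2
      rw [hsnil 1 (by omega) (by omega)] at e2
      simp only [List.nil_append] at e2
      simp only [applyMorph, List.flatMap_append, List.flatMap_cons,
        List.flatMap_nil, List.append_nil]
      rw [hga0, hga1, hga2]
      simp only [applyMorph] at e1 e2
      rw [← e1]
      exact e2
    set B := ws 2 ++ [a 2] with hB
    have hBne : B ≠ [] := by simp [hB]
    have hwB : w = wpow B k := by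
      rw [hw]
      obtain ⟨k', hk'⟩ : ∃ k', k = k' + 1 := ⟨k-1, by omega⟩
      subst hk'
      rw [List.range_succ_eq_map, List.flatMap_cons, List.flatMap_map]
      have hc : (List.range k').flatMap
          (fun i => (fun i => ws (i+1) ++ [a (i+1)]) (Nat.succ i)) = wpow B k' := by
        apply flat_const
        intro j hj
        show ws (j+2) ++ [a (j+2)] = B
        rw [hweq (j+2) (by omega) (by omega),
          (haeq (j+2) (by omega) (by omega)).trans (haeq 2 (by omega) (by omega)).symm]
      rw [hc, wpow_succ, ← hhead]
      simp [List.append_assoc]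
    exact hfree B hBne (hwB ▸ List.infix_rfl)
  · -- main case : m ≥ 1
    have hs0m : (s 0).length = (s i).length := mod_trick' hs0le hmpos hmlt hx0
    have hslen : ∀ j, j ≤ k - 1 → (s j).length = (s i).length := by
      intro j hj
      rcases Nat.eq_zero_or_pos j with rfl | hj0
      · exact hs0m
      · exact hs_all j hj0 (by omega)
    have seq : ∀ j, j ≤ k - 1 → s j = s i := by
      intro j hj
      have e1 := hu' (j+1) (by omega) (by omega)
      have e2 := hu' (i+1) (by omega) (by omega)
      simp only [Nat.add_sub_cancel] at e1 e2
      rw [List.append_assoc] at e1 e2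
      exact (List.append_inj (e1.symm.trans e2) (by rw [hslen j hj])).1
    have hweq1 : ∀ j, 1 ≤ j → j ≤ k → ws j = ws 1 := by
      intro j h1 h2
      apply minj
      have e1 := hu' j h1 h2
      rw [seq (j-1) (by omega), hpeq j h1 h2] at e1
      have e2 := hu' 1 (by omega) (by omega)
      rw [show (1:ℕ) - 1 = 0 from rfl] at e2
      rw [seq 0 (by omega)] at e2
      have := e1.symm.trans e2
      exact List.append_cancel_left (List.append_cancel_right this)
    have haeq1 : ∀ j, 1 ≤ j → j ≤ k - 1 → a j = a 1 := by
      intro j h1 h2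
      apply ginj
      rw [him j (by omega), him 1 (by omega), hpeq j h1 (by omega),
        seq j h2, seq 1 (by omega)]
    have hdisj : a k = a 1 ∨ a 0 = a 1 := by
      have h1 : g (a 1) = p 1 ++ s 1 := him 1 (by omega)
      have h2 : g (a k) = p 1 ++ s k := by
        rw [him k le_rfl, hpeq k (by omega) le_rfl]
      have h3 : g (a 0) = p 0 ++ s 1 := by
        rw [him 0 (by omega), seq 0 (by omega), ← seq 1 (by omega)]
      exact hps (a 1) (a k) (a 0) (p 1) (s 1) (s k) (p 0) h1 h2 h3
    rcases hdisj with hak | ha0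
    · set v := ws 1 ++ [a 1] with hv
      have hvne : v ≠ [] := by simp [hv]
      have hwv : w = [a 0] ++ wpow v k := by
        rw [hw]
        congr 1
        apply flat_const
        intro j hj
        have haj : a (j+1) = a 1 := by
          rcases Nat.lt_or_ge (j+1) k with h' | h'
          · exact haeq1 (j+1) (by omega) (by omega)
          · rw [show j+1 = k by omega]; exact hak
        rw [hweq1 (j+1) (by omega) (by omega), haj]
      exact hfree v hvne ⟨[a 0], [], by rw [hwv]; simp⟩
    · set v := [a 0] ++ ws 1 with hv
      have hvne : v ≠ [] := by simp [hv]
      have fs := front_shift (fun j => [a j]) (fun j => ws j) k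
      have hflat : (List.range k).flatMap (fun i => [a i] ++ ws (i+1)) = wpow v k := by
        apply flat_const
        intro j hj
        have haj : a j = a 0 := by
          rcases Nat.eq_zero_or_pos j with rfl | hj0
          · rfl
          · exact (haeq1 j hj0 (by omega)).trans ha0.symm
        rw [haj, hweq1 (j+1) (by omega) (by omega)]
      have hwv : w = wpow v k ++ [a k] := by
        rw [hw, fs, hflat]
      exact hfree v hvne ⟨[], [a k], by rw [hwv]; simp⟩
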